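/- In the graph G of the resolving-set construction, if S is a minimal resolving set of G such that S ∩ (H ∪ H') ≠ ∅, then S = Z ∪ {e} for some Z ∈ 𝓩 and some vertex e ∈ H ∪ H'. -/

import Mathlib

namespace ResConstr

/-! ## The resolving-set construction

Given a Sperner hypergraph `ℋ` with vertex set `{v_1, …, v_n}` (encoded as `Fin n`) and
edge set `E_1, …, E_m` (encoded as `E : Fin m → Set (Fin n)`), where `n = 2^p > 2` and
`m = 2^q > 2`, we build the graph `G` of the reduction from Trans-Enum to MinResolving.
Vertex `v_i` of the paper is `Vert.v ⟨i-1⟩`, edge vertex `e_j` is `Vert.e ⟨j-1⟩`, etc.;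
`U = {u_1, u'_1, …, u_{log n + 1}, u'_{log n + 1}}` is encoded by `Vert.u, Vert.u'` over
`Fin (p+1)` and `W` similarly by `Vert.w, Vert.w'` over `Fin (q+1)`. -/

inductive Vert (n m p q : ℕ) : Type
  | v : Fin n → Vert n m p q
  | e : Fin m → Vert n m p q
  | e' : Fin m → Vert n m p q
  | u : Fin (p + 1) → Vert n m p q
  | u' : Fin (p + 1) → Vert n m p q
  | w : Fin (q + 1) → Vert n m p q
  | w' : Fin (q + 1) → Vert n m p q

variable {n m p q : ℕ}

/-- The base (one-sided) adjacency relation of the construction; the graph is obtained by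
symmetrizing it.  `Nat.testBit (i+1) k = true` encodes `k+1 ∈ I(i+1)`, i.e. the `(k+1)`-th
bit (starting from 1) of the binary representation of the paper-index `i+1` equals 1. -/
def baseRel (E : Fin m → Set (Fin n)) : Vert n m p q → Vert n m p q → Prop
  | .v _, .v _ => True                                       -- V is a clique
  | .e _, .e _ => True                                       -- H is a clique
  | .e' _, .e' _ => True                                     -- H' is a clique
  | .v i, .e j => i ∉ E j                                    -- non-incidence between V and H
  | .v _, .e' _ => True                                      -- V is complete to H'
  | .v i, .u k => Nat.testBit (i.val + 1) k.val = true       -- binary coding between V and U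
  | .v i, .u' k => Nat.testBit (i.val + 1) k.val = true
  | .v _, .w _ => True                                       -- W is complete to V
  | .v _, .w' _ => True
  | .e j, .w k => Nat.testBit (j.val + 1) k.val = true       -- binary coding between H ∪ H' and W
  | .e j, .w' k => Nat.testBit (j.val + 1) k.val = true
  | .e' j, .w k => Nat.testBit (j.val + 1) k.val = true
  | .e' j, .w' k => Nat.testBit (j.val + 1) k.val = true
  | .u _, .u _ => True                                       -- U is a clique minus the edges u_i u'_i
  | .u k, .u' k' => k ≠ k'
  | .u' _, .u' _ => True
  | .u _, .e _ => True                                       -- U is complete to H ∪ H'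
  | .u _, .e' _ => True
  | .u' _, .e _ => True
  | .u' _, .e' _ => True
  | .w k, .w' k' => k = k'                                   -- the only edges inside W are w_j w'_j
  | _, _ => False

/-- The graph `G` of the resolving-set construction. -/
def G (E : Fin m → Set (Fin n)) : SimpleGraph (Vert n m p q) :=
  SimpleGraph.fromRel (baseRel E)

/-- `S` is a resolving set of `G`. -/
def IsResolvingSet {α : Type*} (G : SimpleGraph α) (S : Set α) : Prop :=
  ∀ a b : α, a ≠ b → ∃ z ∈ S, G.dist a z ≠ G.dist b z

/-- `S` is an inclusion-wise minimal resolving set of `G`. -/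
def IsMinimalResolvingSet {α : Type*} (G : SimpleGraph α) (S : Set α) : Prop :=
  IsResolvingSet G S ∧ ∀ S' : Set α, S' ⊂ S → ¬ IsResolvingSet G S'

/-- `T` is a transversal of the hypergraph with edges `E j`. -/
def IsTransversal (E : Fin m → Set (Fin n)) (T : Set (Fin n)) : Prop :=
  ∀ j : Fin m, (T ∩ E j).Nonempty

/-- `T` is an inclusion-wise minimal transversal of the hypergraph with edges `E j`. -/
def IsMinimalTransversal (E : Fin m → Set (Fin n)) (T : Set (Fin n)) : Prop :=
  IsTransversal E T ∧ ∀ T' : Set (Fin n), T' ⊂ T → ¬ IsTransversal E T'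

/-- The family `𝒵` of all sets `Z = X ∪ Y` where `X` picks exactly one vertex from each pair
`{u_k, u'_k}` and `Y` picks exactly one vertex from each pair `{w_k, w'_k}`. -/
def ZFam : Set (Set (Vert n m p q)) :=
  {Z | ∃ (x : Fin (p + 1) → Bool) (y : Fin (q + 1) → Bool),
    Z = (Set.range fun k => if x k then (Vert.u k : Vert n m p q) else Vert.u' k) ∪
        (Set.range fun k => if y k then (Vert.w k : Vert n m p q) else Vert.w' k)}


/-! ### Auxiliary machinery -/

open scoped Classical

section Aux

variable {n m p q : ℕ}

lemma adj_iff (E : Fin m → Set (Fin n)) (a b : Vert n m p q) :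
    (G E).Adj a b ↔ a ≠ b ∧ (baseRel E a b ∨ baseRel E b a) :=
  SimpleGraph.fromRel_adj _ a b

lemma exists_testBit_true {x t : ℕ} (hx : 0 < x) (hx2 : x ≤ 2 ^ t) :
    ∃ k ≤ t, x.testBit k = true := by
  by_contra h
  push_neg at h
  have hx0 : x = 0 := by
    refine Nat.eq_of_testBit_eq fun i => ?_
    rw [Nat.zero_testBit]
    rcases le_or_gt i t with h' | h'
    · simpa using h i h'
    · exact Nat.testBit_lt_two_pow (lt_of_le_of_lt hx2 (Nat.pow_lt_pow_right one_lt_two h'))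
  omega

lemma exists_testBit_false {x t : ℕ} (ht : t ≠ 0) (hx2 : x ≤ 2 ^ t) :
    ∃ k ≤ t, x.testBit k = false := by
  rcases eq_or_lt_of_le hx2 with h | h
  · refine ⟨0, Nat.zero_le t, ?_⟩
    rw [h, Nat.testBit_two_pow]
    simp [ht]
  · exact ⟨t, le_rfl, Nat.testBit_lt_two_pow h⟩

lemma exists_testBit_ne {x y t : ℕ} (hx : x < 2 ^ (t + 1)) (hy : y < 2 ^ (t + 1))
    (hxy : x ≠ y) : ∃ k ≤ t, x.testBit k ≠ y.testBit k := by
  by_contra h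
  push_neg at h
  refine hxy (Nat.eq_of_testBit_eq fun i => ?_)
  rcases le_or_gt i t with h' | h'
  · exact h i h'
  · rw [Nat.testBit_lt_two_pow (lt_of_lt_of_le hx (Nat.pow_le_pow_right (by norm_num) h')),
      Nat.testBit_lt_two_pow (lt_of_lt_of_le hy (Nat.pow_le_pow_right (by norm_num) h'))]

lemma boolne {b1 b2 : Bool} (h : b1 ≠ b2) : ¬(b1 = true ↔ b2 = true) := by
  revert h; revert b1 b2; decide

/-- A vertex of `V` whose code has bit `l` set (so it is adjacent to `u_l` and `u'_l`). -/
lemma hUadj (E : Fin m → Set (Fin n)) (hn : n = 2 ^ p) (l : Fin (p + 1)) :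
    ∃ ii : Fin n, Nat.testBit (ii.val + 1) l.val = true ∧
      (G E).Adj (Vert.v ii : Vert n m p q) (.u l) ∧
      (G E).Adj (Vert.v ii : Vert n m p q) (.u' l) := by
  have h1 : (2 : ℕ) ^ l.val ≤ 2 ^ p := Nat.pow_le_pow_right (by norm_num) (Nat.lt_succ_iff.mp l.isLt)
  have h0 : (1 : ℕ) ≤ 2 ^ l.val := Nat.one_le_two_pow
  have hlt : 2 ^ l.val - 1 < n := by omega
  have hs : 2 ^ l.val - 1 + 1 = 2 ^ l.val := by omega
  refine ⟨⟨2 ^ l.val - 1, hlt⟩, ?_, ?_, ?_⟩ <;>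
    simp [adj_iff, baseRel, hs, Nat.testBit_two_pow]

/-- A vertex of `H` (resp. `H'`) whose code has bit `l` set. -/
lemma hWadj (E : Fin m → Set (Fin n)) (hm : m = 2 ^ q) (l : Fin (q + 1)) :
    ∃ jj : Fin m, Nat.testBit (jj.val + 1) l.val = true ∧
      (∀ kk : Fin (p + 1), (G E).Adj (Vert.u kk : Vert n m p q) (.e jj)) ∧
      (∀ kk : Fin (p + 1), (G E).Adj (Vert.u' kk : Vert n m p q) (.e jj)) ∧
      (G E).Adj (Vert.e jj : Vert n m p q) (.w l) ∧
      (G E).Adj (Vert.e jj : Vert n m p q) (.w' l) ∧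
      (G E).Adj (Vert.e' jj : Vert n m p q) (.w l) ∧
      (G E).Adj (Vert.e' jj : Vert n m p q) (.w' l) ∧
      (∀ kk : Fin (p + 1), (G E).Adj (Vert.u kk : Vert n m p q) (.e' jj)) ∧
      (∀ kk : Fin (p + 1), (G E).Adj (Vert.u' kk : Vert n m p q) (.e' jj)) := by
  have h1 : (2 : ℕ) ^ l.val ≤ 2 ^ q := Nat.pow_le_pow_right (by norm_num) (Nat.lt_succ_iff.mp l.isLt)
  have h0 : (1 : ℕ) ≤ 2 ^ l.val := Nat.one_le_two_pow
  have hlt : 2 ^ l.val - 1 < m := by omega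
  have hs : 2 ^ l.val - 1 + 1 = 2 ^ l.val := by omega
  refine ⟨⟨2 ^ l.val - 1, hlt⟩, ?_, ?_, ?_, ?_, ?_, ?_, ?_, ?_, ?_⟩ <;>
    simp [adj_iff, baseRel, hs, Nat.testBit_two_pow]

lemma hVbit (E : Fin m → Set (Fin n)) (hn : n = 2 ^ p) (i : Fin n) :
    ∃ kk : Fin (p + 1), (G E).Adj (Vert.v i : Vert n m p q) (.u kk) := by
  obtain ⟨k, hk, hbit⟩ := exists_testBit_true (Nat.succ_pos i.val)
    (show i.val + 1 ≤ 2 ^ p by rw [← hn]; exact i.isLt)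
  exact ⟨⟨k, by omega⟩, by simp [adj_iff, baseRel, hbit]⟩

/-- Every pair of distinct non-adjacent vertices has a common neighbor (so `G` has
diameter at most 2). -/
lemma common_nbr (E : Fin m → Set (Fin n)) (hn : n = 2 ^ p) (hm : m = 2 ^ q)
    (hn2 : 2 < n) (hm2 : 2 < m) :
    ∀ a b : Vert n m p q, a ≠ b → ¬ (G E).Adj a b →
      ∃ c, (G E).Adj a c ∧ (G E).Adj c b := by
  have swap : ∀ a b : Vert n m p q,
      (∃ c, (G E).Adj a c ∧ (G E).Adj c b) → ∃ c, (G E).Adj b c ∧ (G E).Adj c a := by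
    rintro a b ⟨c, h1, h2⟩; exact ⟨c, h2.symm, h1.symm⟩
  have Cve : ∀ (i : Fin n) (j : Fin m),
      ∃ c, (G E).Adj (Vert.v i : Vert n m p q) c ∧ (G E).Adj c (.e j) := by
    intro i j
    obtain ⟨kk, hkk⟩ := hVbit E hn i
    exact ⟨.u kk, hkk, by simp [adj_iff, baseRel]⟩
  have Cee' : ∀ (j j' : Fin m),
      ∃ c, (G E).Adj (Vert.e j : Vert n m p q) c ∧ (G E).Adj c (.e' j') := by
    intro j j'
    exact ⟨.u 0, by simp [adj_iff, baseRel], by simp [adj_iff, baseRel]⟩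
  have Cuu' : ∀ (k k' : Fin (p + 1)),
      ∃ c, (G E).Adj (Vert.u k : Vert n m p q) c ∧ (G E).Adj c (.u' k') := by
    intro k k'
    exact ⟨.e ⟨0, by omega⟩, by simp [adj_iff, baseRel], by simp [adj_iff, baseRel]⟩
  have Cuw : ∀ (k : Fin (p + 1)) (l : Fin (q + 1)),
      ∃ c, (G E).Adj (Vert.u k : Vert n m p q) c ∧ (G E).Adj c (.w l) := by
    intro k l
    obtain ⟨jj, _, hAu, _, hWl, _, _, _, _, _⟩ := hWadj E hm l
    exact ⟨.e jj, hAu k, hWl⟩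
  have Cuw' : ∀ (k : Fin (p + 1)) (l : Fin (q + 1)),
      ∃ c, (G E).Adj (Vert.u k : Vert n m p q) c ∧ (G E).Adj c (.w' l) := by
    intro k l
    obtain ⟨jj, _, hAu, _, _, hW'l, _, _, _, _⟩ := hWadj E hm l
    exact ⟨.e jj, hAu k, hW'l⟩
  have Cu'w : ∀ (k : Fin (p + 1)) (l : Fin (q + 1)),
      ∃ c, (G E).Adj (Vert.u' k : Vert n m p q) c ∧ (G E).Adj c (.w l) := by
    intro k l
    obtain ⟨jj, _, _, hAu', hWl, _, _, _, _, _⟩ := hWadj E hm l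
    exact ⟨.e jj, hAu' k, hWl⟩
  have Cu'w' : ∀ (k : Fin (p + 1)) (l : Fin (q + 1)),
      ∃ c, (G E).Adj (Vert.u' k : Vert n m p q) c ∧ (G E).Adj c (.w' l) := by
    intro k l
    obtain ⟨jj, _, _, hAu', _, hW'l, _, _, _, _⟩ := hWadj E hm l
    exact ⟨.e jj, hAu' k, hW'l⟩
  have hv0 : (0 : ℕ) < n := by omega
  intro a b hab hnadj
  rcases a with i | j | j | k | k | k | k <;> rcases b with i' | j' | j' | k' | k' | k' | k'
  -- a = v i
  · exact absurd (by simp [adj_iff, baseRel]; simpa using hab) hnadj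
  · exact Cve i j'
  · exact absurd (by simp [adj_iff, baseRel]) hnadj
  · simp only [adj_iff, baseRel] at hnadj
    simp at hnadj
    obtain ⟨ii, htb, hA, _⟩ := hUadj E hn k'
    have hne2 : i ≠ ii := by
      intro hEq; rw [hEq, htb] at hnadj; simp at hnadj
    exact ⟨.v ii, by simp [adj_iff, baseRel, hne2], hA⟩
  · simp only [adj_iff, baseRel] at hnadj
    simp at hnadj
    obtain ⟨ii, htb, _, hA'⟩ := hUadj E hn k'
    have hne2 : i ≠ ii := by
      intro hEq; rw [hEq, htb] at hnadj; simp at hnadj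
    exact ⟨.v ii, by simp [adj_iff, baseRel, hne2], hA'⟩
  · exact absurd (by simp [adj_iff, baseRel]) hnadj
  · exact absurd (by simp [adj_iff, baseRel]) hnadj
  -- a = e j
  · exact swap _ _ (Cve i' j)
  · exact absurd (by simp [adj_iff, baseRel]; simpa using hab) hnadj
  · exact Cee' j j'
  · exact absurd (by simp [adj_iff, baseRel]) hnadj
  · exact absurd (by simp [adj_iff, baseRel]) hnadj
  · simp only [adj_iff, baseRel] at hnadj
    simp at hnadj
    obtain ⟨jj, htb, _, _, hWl, _, _, _, _, _⟩ := hWadj E hm k'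
    have hne2 : j ≠ jj := by
      intro hEq; rw [hEq, htb] at hnadj; simp at hnadj
    exact ⟨.e jj, by simp [adj_iff, baseRel, hne2], hWl⟩
  · simp only [adj_iff, baseRel] at hnadj
    simp at hnadj
    obtain ⟨jj, htb, _, _, _, hW'l, _, _, _, _⟩ := hWadj E hm k'
    have hne2 : j ≠ jj := by
      intro hEq; rw [hEq, htb] at hnadj; simp at hnadj
    exact ⟨.e jj, by simp [adj_iff, baseRel, hne2], hW'l⟩
  -- a = e' j
  · exact absurd (by simp [adj_iff, baseRel]) hnadj
  · exact swap _ _ (Cee' j' j)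
  · exact absurd (by simp [adj_iff, baseRel]; simpa using hab) hnadj
  · exact absurd (by simp [adj_iff, baseRel]) hnadj
  · exact absurd (by simp [adj_iff, baseRel]) hnadj
  · simp only [adj_iff, baseRel] at hnadj
    simp at hnadj
    obtain ⟨jj, htb, _, _, _, _, hE'Wl, _, _, _⟩ := hWadj E hm k'
    have hne2 : j ≠ jj := by
      intro hEq; rw [hEq, htb] at hnadj; simp at hnadj
    exact ⟨.e' jj, by simp [adj_iff, baseRel, hne2], hE'Wl⟩
  · simp only [adj_iff, baseRel] at hnadj
    simp at hnadj
    obtain ⟨jj, htb, _, _, _, _, _, hE'W'l, _, _⟩ := hWadj E hm k'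
    have hne2 : j ≠ jj := by
      intro hEq; rw [hEq, htb] at hnadj; simp at hnadj
    exact ⟨.e' jj, by simp [adj_iff, baseRel, hne2], hE'W'l⟩
  -- a = u k
  · simp only [adj_iff, baseRel] at hnadj
    simp at hnadj
    obtain ⟨ii, htb, hA, _⟩ := hUadj E hn k
    have hne2 : ii ≠ i' := by
      intro hEq; rw [← hEq, htb] at hnadj; simp at hnadj
    exact ⟨.v ii, hA.symm, by simp [adj_iff, baseRel, hne2]⟩
  · exact absurd (by simp [adj_iff, baseRel]) hnadj
  · exact absurd (by simp [adj_iff, baseRel]) hnadj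
  · exact absurd (by simp [adj_iff, baseRel]; simpa using hab) hnadj
  · exact Cuu' k k'
  · exact Cuw k k'
  · exact Cuw' k k'
  -- a = u' k
  · simp only [adj_iff, baseRel] at hnadj
    simp at hnadj
    obtain ⟨ii, htb, _, hA'⟩ := hUadj E hn k
    have hne2 : ii ≠ i' := by
      intro hEq; rw [← hEq, htb] at hnadj; simp at hnadj
    exact ⟨.v ii, hA'.symm, by simp [adj_iff, baseRel, hne2]⟩
  · exact absurd (by simp [adj_iff, baseRel]) hnadj
  · exact absurd (by simp [adj_iff, baseRel]) hnadj
  · exact swap _ _ (Cuu' k' k)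
  · exact absurd (by simp [adj_iff, baseRel]; simpa using hab) hnadj
  · exact Cu'w k k'
  · exact Cu'w' k k'
  -- a = w k
  · exact absurd (by simp [adj_iff, baseRel]) hnadj
  · simp only [adj_iff, baseRel] at hnadj
    simp at hnadj
    obtain ⟨jj, htb, _, _, hWl, _, _, _, _, _⟩ := hWadj E hm k
    have hne2 : jj ≠ j' := by
      intro hEq; rw [← hEq, htb] at hnadj; simp at hnadj
    exact ⟨.e jj, hWl.symm, by simp [adj_iff, baseRel, hne2]⟩
  · simp only [adj_iff, baseRel] at hnadj
    simp at hnadj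
    obtain ⟨jj, htb, _, _, _, _, hE'Wl, _, _, _⟩ := hWadj E hm k
    have hne2 : jj ≠ j' := by
      intro hEq; rw [← hEq, htb] at hnadj; simp at hnadj
    exact ⟨.e' jj, hE'Wl.symm, by simp [adj_iff, baseRel, hne2]⟩
  · exact swap _ _ (Cuw k' k)
  · exact swap _ _ (Cu'w k' k)
  · exact ⟨.v ⟨0, hv0⟩, by simp [adj_iff, baseRel], by simp [adj_iff, baseRel]⟩
  · exact ⟨.v ⟨0, hv0⟩, by simp [adj_iff, baseRel], by simp [adj_iff, baseRel]⟩
  -- a = w' k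
  · exact absurd (by simp [adj_iff, baseRel]) hnadj
  · simp only [adj_iff, baseRel] at hnadj
    simp at hnadj
    obtain ⟨jj, htb, _, _, _, hW'l, _, _, _, _⟩ := hWadj E hm k
    have hne2 : jj ≠ j' := by
      intro hEq; rw [← hEq, htb] at hnadj; simp at hnadj
    exact ⟨.e jj, hW'l.symm, by simp [adj_iff, baseRel, hne2]⟩
  · simp only [adj_iff, baseRel] at hnadj
    simp at hnadj
    obtain ⟨jj, htb, _, _, _, _, _, hE'W'l, _, _⟩ := hWadj E hm k
    have hne2 : jj ≠ j' := by
      intro hEq; rw [← hEq, htb] at hnadj; simp at hnadj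
    exact ⟨.e' jj, hE'W'l.symm, by simp [adj_iff, baseRel, hne2]⟩
  · exact swap _ _ (Cuw' k' k)
  · exact swap _ _ (Cu'w' k' k)
  · exact ⟨.v ⟨0, hv0⟩, by simp [adj_iff, baseRel], by simp [adj_iff, baseRel]⟩
  · exact ⟨.v ⟨0, hv0⟩, by simp [adj_iff, baseRel], by simp [adj_iff, baseRel]⟩

/-- The distance formula in a graph of diameter ≤ 2. -/
lemma dist_formula (E : Fin m → Set (Fin n))
    (hcn : ∀ a b : Vert n m p q, a ≠ b → ¬ (G E).Adj a b →
      ∃ c, (G E).Adj a c ∧ (G E).Adj c b) (a b : Vert n m p q) :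
    (G E).dist a b = if a = b then 0 else if (G E).Adj a b then 1 else 2 := by
  split_ifs with h1 h2
  · subst h1; exact SimpleGraph.dist_self
  · exact SimpleGraph.dist_eq_one_iff_adj.mpr h2
  · obtain ⟨c, hac, hcb⟩ := hcn a b h1 h2
    have hle : (G E).dist a b ≤ 2 := by
      simpa using SimpleGraph.dist_le
        (SimpleGraph.Walk.cons hac (SimpleGraph.Walk.cons hcb SimpleGraph.Walk.nil))
    have hpos : 0 < (G E).dist a b := SimpleGraph.Reachable.pos_dist_of_ne
      ⟨SimpleGraph.Walk.cons hac (SimpleGraph.Walk.cons hcb SimpleGraph.Walk.nil)⟩ h1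
    have hne1 : (G E).dist a b ≠ 1 := fun h => h2 (SimpleGraph.dist_eq_one_iff_adj.mp h)
    omega

/-- The separation predicate: some vertex of `T` resolves the pair `a, b`. -/
def Res (E : Fin m → Set (Fin n)) (T : Set (Vert n m p q)) (a b : Vert n m p q) : Prop :=
  ∃ z ∈ T, z = a ∨ z = b ∨ ¬((G E).Adj a z ↔ (G E).Adj b z)

lemma Res.symm {E : Fin m → Set (Fin n)} {T : Set (Vert n m p q)} {a b : Vert n m p q}
    (h : Res E T a b) : Res E T b a := by
  obtain ⟨z, hz, h⟩ := h
  exact ⟨z, hz, by tauto⟩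

lemma isResolving_of_adj (E : Fin m → Set (Fin n))
    (hcn : ∀ a b : Vert n m p q, a ≠ b → ¬ (G E).Adj a b →
      ∃ c, (G E).Adj a c ∧ (G E).Adj c b)
    (T : Set (Vert n m p q)) (h : ∀ a b : Vert n m p q, a ≠ b → Res E T a b) :
    IsResolvingSet (G E) T := by
  intro a b hab
  obtain ⟨z, hz, hcase⟩ := h a b hab
  refine ⟨z, hz, ?_⟩
  rw [dist_formula E hcn, dist_formula E hcn]
  have hloop : ∀ c : Vert n m p q, ¬ (G E).Adj c c := fun c => (G E).loopless.irrefl c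
  by_cases h1 : a = z <;> by_cases h2 : b = z
  · exact absurd (h1.trans h2.symm) hab
  · rw [if_pos h1, if_neg h2]
    split_ifs <;> omega
  · rw [if_neg h1, if_pos h2]
    split_ifs <;> omega
  · rw [if_neg h1, if_neg h2]
    rcases hcase with rfl | rfl | hxor
    · exact absurd rfl h1
    · exact absurd rfl h2
    · by_cases hA : (G E).Adj a z <;> by_cases hB : (G E).Adj b z
      · exact absurd (iff_of_true hA hB) hxor
      · rw [if_pos hA, if_neg hB]; omega
      · rw [if_neg hA, if_pos hB]; omega
      · exact absurd (iff_of_false hA hB) hxor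

/-- A resolving set must contain `u_k` or `u'_k`. -/
lemma mem_pair_u (E : Fin m → Set (Fin n))
    (hcn : ∀ a b : Vert n m p q, a ≠ b → ¬ (G E).Adj a b →
      ∃ c, (G E).Adj a c ∧ (G E).Adj c b)
    {S : Set (Vert n m p q)} (hS : IsResolvingSet (G E) S) (k : Fin (p + 1)) :
    Vert.u (n := n) (m := m) (q := q) k ∈ S ∨ Vert.u' k ∈ S := by
  obtain ⟨z, hzS, hd⟩ := hS (.u k) (.u' k) (by simp)
  by_contra hc
  push_neg at hc
  obtain ⟨hc1, hc2⟩ := hc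
  apply hd
  have h1 : ¬ (Vert.u k : Vert n m p q) = z := fun h => hc1 (h ▸ hzS)
  have h2 : ¬ (Vert.u' k : Vert n m p q) = z := fun h => hc2 (h ▸ hzS)
  have hAdj : (G E).Adj (.u k) z ↔ (G E).Adj (.u' k) z := by
    rcases z with i | j | j | l | l | l | l
    · simp [adj_iff, baseRel]
    · simp [adj_iff, baseRel]
    · simp [adj_iff, baseRel]
    · simp [adj_iff, baseRel, ne_comm]
    · simp [adj_iff, baseRel]
    · simp [adj_iff, baseRel]
    · simp [adj_iff, baseRel]
  rw [dist_formula E hcn, dist_formula E hcn, if_neg h1, if_neg h2]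
  exact if_congr hAdj rfl rfl

/-- A resolving set must contain `w_k` or `w'_k`. -/
lemma mem_pair_w (E : Fin m → Set (Fin n))
    (hcn : ∀ a b : Vert n m p q, a ≠ b → ¬ (G E).Adj a b →
      ∃ c, (G E).Adj a c ∧ (G E).Adj c b)
    {S : Set (Vert n m p q)} (hS : IsResolvingSet (G E) S) (k : Fin (q + 1)) :
    Vert.w (n := n) (m := m) (p := p) k ∈ S ∨ Vert.w' k ∈ S := by
  obtain ⟨z, hzS, hd⟩ := hS (.w k) (.w' k) (by simp)
  by_contra hc
  push_neg at hc
  obtain ⟨hc1, hc2⟩ := hc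
  apply hd
  have h1 : ¬ (Vert.w k : Vert n m p q) = z := fun h => hc1 (h ▸ hzS)
  have h2 : ¬ (Vert.w' k : Vert n m p q) = z := fun h => hc2 (h ▸ hzS)
  have hAdj : (G E).Adj (.w k) z ↔ (G E).Adj (.w' k) z := by
    rcases z with i | j | j | l | l | l | l
    · simp [adj_iff, baseRel]
    · simp [adj_iff, baseRel]
    · simp [adj_iff, baseRel]
    · simp [adj_iff, baseRel]
    · simp [adj_iff, baseRel]
    · have hlk : l ≠ k := fun h => h1 (by rw [h])
      simp [adj_iff, baseRel, hlk]
    · have hlk : l ≠ k := fun h => h2 (by rw [h])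
      simp [adj_iff, baseRel, Ne.symm hlk]
  rw [dist_formula E hcn, dist_formula E hcn, if_neg h1, if_neg h2]
  exact if_congr hAdj rfl rfl

/-- For any choice `Z ∈ 𝒵` and any `f ∈ H ∪ H'`, the set `Z ∪ {f}` separates all pairs. -/
lemma key_adj (E : Fin m → Set (Fin n)) (hn : n = 2 ^ p) (hm : m = 2 ^ q)
    (hn2 : 2 < n) (hm2 : 2 < m)
    (x : Fin (p + 1) → Bool) (y : Fin (q + 1) → Bool) (f : Vert n m p q)
    (hf : f ∈ Set.range (Vert.e : Fin m → Vert n m p q) ∪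
      Set.range (Vert.e' : Fin m → Vert n m p q)) :
    ∀ a b : Vert n m p q, a ≠ b →
      Res E (((Set.range fun k => if x k then (Vert.u k : Vert n m p q) else Vert.u' k) ∪
        (Set.range fun k => if y k then (Vert.w k : Vert n m p q) else Vert.w' k)) ∪ {f}) a b := by
  set T : Set (Vert n m p q) :=
    ((Set.range fun k => if x k then (Vert.u k : Vert n m p q) else Vert.u' k) ∪
      (Set.range fun k => if y k then (Vert.w k : Vert n m p q) else Vert.w' k)) ∪ {f} with hT
  have hq0 : q ≠ 0 := by rintro rfl; rw [pow_zero] at hm; omega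
  have hp0 : p ≠ 0 := by rintro rfl; rw [pow_zero] at hn; omega
  have h2p : (1 : ℕ) ≤ 2 ^ p := Nat.one_le_two_pow
  have h2q : (1 : ℕ) ≤ 2 ^ q := Nat.one_le_two_pow
  have hpow2p : (2 : ℕ) ^ p < 2 ^ (p + 1) := by rw [pow_succ]; omega
  have hpow2q : (2 : ℕ) ^ q < 2 ^ (q + 1) := by rw [pow_succ]; omega
  have pickU : ∀ k : Fin (p + 1),
      (Vert.u k : Vert n m p q) ∈ T ∨ (Vert.u' k : Vert n m p q) ∈ T := by
    intro k
    by_cases hx : x k = true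
    · exact Or.inl (Set.mem_union_left _ (Set.mem_union_left _ ⟨k, by simp [hx]⟩))
    · exact Or.inr (Set.mem_union_left _ (Set.mem_union_left _ ⟨k, by simp [hx]⟩))
  have pickW : ∀ k : Fin (q + 1),
      (Vert.w k : Vert n m p q) ∈ T ∨ (Vert.w' k : Vert n m p q) ∈ T := by
    intro k
    by_cases hy : y k = true
    · exact Or.inl (Set.mem_union_left _ (Set.mem_union_right _ ⟨k, by simp [hy]⟩))
    · exact Or.inr (Set.mem_union_left _ (Set.mem_union_right _ ⟨k, by simp [hy]⟩))
  have hfT : f ∈ T := Set.mem_union_right _ rfl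
  have Kvv : ∀ i i' : Fin n, i ≠ i' → Res E T (.v i) (.v i') := by
    intro i i' hne
    have hi := i.isLt
    have hi' := i'.isLt
    obtain ⟨k, hk, hbit⟩ := exists_testBit_ne (t := p) (x := i.val + 1) (y := i'.val + 1)
      (by omega) (by omega) (fun h => hne (Fin.ext (by omega)))
    rcases pickU ⟨k, by omega⟩ with h | h <;>
      refine ⟨_, h, Or.inr (Or.inr ?_)⟩ <;>
      cases hc1 : Nat.testBit (i.val + 1) k <;> cases hc2 : Nat.testBit (i'.val + 1) k <;>
      first
      | (rw [hc1, hc2] at hbit; exact absurd rfl hbit)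
      | simp [adj_iff, baseRel, hc1, hc2]
  have Kve : ∀ (i : Fin n) (j : Fin m), Res E T (.v i) (.e j) := by
    intro i j
    obtain ⟨k, hk, hbit⟩ := exists_testBit_false hq0
      (show j.val + 1 ≤ 2 ^ q by rw [← hm]; exact j.isLt)
    rcases pickW ⟨k, by omega⟩ with h | h <;>
      exact ⟨_, h, Or.inr (Or.inr (by simp [adj_iff, baseRel, hbit]))⟩
  have Kve' : ∀ (i : Fin n) (j : Fin m), Res E T (.v i) (.e' j) := by
    intro i j
    obtain ⟨k, hk, hbit⟩ := exists_testBit_false hq0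
      (show j.val + 1 ≤ 2 ^ q by rw [← hm]; exact j.isLt)
    rcases pickW ⟨k, by omega⟩ with h | h <;>
      exact ⟨_, h, Or.inr (Or.inr (by simp [adj_iff, baseRel, hbit]))⟩
  have Kvu : ∀ (i : Fin n) (k' : Fin (p + 1)), Res E T (.v i) (.u k') := by
    intro i k'
    rcases pickW 0 with h | h <;>
      exact ⟨_, h, Or.inr (Or.inr (by simp [adj_iff, baseRel]))⟩
  have Kvu' : ∀ (i : Fin n) (k' : Fin (p + 1)), Res E T (.v i) (.u' k') := by
    intro i k'
    rcases pickW 0 with h | h <;>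
      exact ⟨_, h, Or.inr (Or.inr (by simp [adj_iff, baseRel]))⟩
  have Kvw : ∀ (i : Fin n) (k' : Fin (q + 1)), Res E T (.v i) (.w k') := by
    intro i k'
    obtain ⟨k, hk, hbit⟩ := exists_testBit_true (Nat.succ_pos _)
      (show i.val + 1 ≤ 2 ^ p by rw [← hn]; exact i.isLt)
    rcases pickU ⟨k, by omega⟩ with h | h <;>
      exact ⟨_, h, Or.inr (Or.inr (by simp [adj_iff, baseRel, hbit]))⟩
  have Kvw' : ∀ (i : Fin n) (k' : Fin (q + 1)), Res E T (.v i) (.w' k') := by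
    intro i k'
    obtain ⟨k, hk, hbit⟩ := exists_testBit_true (Nat.succ_pos _)
      (show i.val + 1 ≤ 2 ^ p by rw [← hn]; exact i.isLt)
    rcases pickU ⟨k, by omega⟩ with h | h <;>
      exact ⟨_, h, Or.inr (Or.inr (by simp [adj_iff, baseRel, hbit]))⟩
  have Kee : ∀ (j j' : Fin m), j ≠ j' → Res E T (.e j) (.e j') := by
    intro j j' hne
    have hj := j.isLt
    have hj' := j'.isLt
    obtain ⟨k, hk, hbit⟩ := exists_testBit_ne (t := q) (x := j.val + 1) (y := j'.val + 1)
      (by omega) (by omega) (fun h => hne (Fin.ext (by omega)))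
    rcases pickW ⟨k, by omega⟩ with h | h <;>
      refine ⟨_, h, Or.inr (Or.inr ?_)⟩ <;>
      cases hc1 : Nat.testBit (j.val + 1) k <;> cases hc2 : Nat.testBit (j'.val + 1) k <;>
      first
      | (rw [hc1, hc2] at hbit; exact absurd rfl hbit)
      | simp [adj_iff, baseRel, hc1, hc2]
  have Ke'e' : ∀ (j j' : Fin m), j ≠ j' → Res E T (.e' j) (.e' j') := by
    intro j j' hne
    have hj := j.isLt
    have hj' := j'.isLt
    obtain ⟨k, hk, hbit⟩ := exists_testBit_ne (t := q) (x := j.val + 1) (y := j'.val + 1)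
      (by omega) (by omega) (fun h => hne (Fin.ext (by omega)))
    rcases pickW ⟨k, by omega⟩ with h | h <;>
      refine ⟨_, h, Or.inr (Or.inr ?_)⟩ <;>
      cases hc1 : Nat.testBit (j.val + 1) k <;> cases hc2 : Nat.testBit (j'.val + 1) k <;>
      first
      | (rw [hc1, hc2] at hbit; exact absurd rfl hbit)
      | simp [adj_iff, baseRel, hc1, hc2]
  have Kee' : ∀ (j j' : Fin m), Res E T (.e j) (.e' j') := by
    intro j j'
    by_cases hjj : j = j'
    · subst hjj
      rcases hf with ⟨j0, rfl⟩ | ⟨j0, rfl⟩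
      · by_cases h0 : j0 = j
        · subst h0; exact ⟨_, hfT, Or.inl rfl⟩
        · exact ⟨_, hfT, Or.inr (Or.inr (by simp [adj_iff, baseRel, Ne.symm h0]))⟩
      · by_cases h0 : j0 = j
        · subst h0; exact ⟨_, hfT, Or.inr (Or.inl rfl)⟩
        · exact ⟨_, hfT, Or.inr (Or.inr (by simp [adj_iff, baseRel, Ne.symm h0]))⟩
    · have hj := j.isLt
      have hj' := j'.isLt
      obtain ⟨k, hk, hbit⟩ := exists_testBit_ne (t := q) (x := j.val + 1) (y := j'.val + 1)
        (by omega) (by omega) (fun h => hjj (Fin.ext (by omega)))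
      rcases pickW ⟨k, by omega⟩ with h | h <;>
        refine ⟨_, h, Or.inr (Or.inr ?_)⟩ <;>
        cases hc1 : Nat.testBit (j.val + 1) k <;> cases hc2 : Nat.testBit (j'.val + 1) k <;>
        first
        | (rw [hc1, hc2] at hbit; exact absurd rfl hbit)
        | simp [adj_iff, baseRel, hc1, hc2]
  have Keu : ∀ (j : Fin m) (k' : Fin (p + 1)), Res E T (.e j) (.u k') := by
    intro j k'
    obtain ⟨k, hk, hbit⟩ := exists_testBit_true (Nat.succ_pos _)
      (show j.val + 1 ≤ 2 ^ q by rw [← hm]; exact j.isLt)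
    rcases pickW ⟨k, by omega⟩ with h | h <;>
      exact ⟨_, h, Or.inr (Or.inr (by simp [adj_iff, baseRel, hbit]))⟩
  have Keu' : ∀ (j : Fin m) (k' : Fin (p + 1)), Res E T (.e j) (.u' k') := by
    intro j k'
    obtain ⟨k, hk, hbit⟩ := exists_testBit_true (Nat.succ_pos _)
      (show j.val + 1 ≤ 2 ^ q by rw [← hm]; exact j.isLt)
    rcases pickW ⟨k, by omega⟩ with h | h <;>
      exact ⟨_, h, Or.inr (Or.inr (by simp [adj_iff, baseRel, hbit]))⟩
  have Ke'u : ∀ (j : Fin m) (k' : Fin (p + 1)), Res E T (.e' j) (.u k') := by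
    intro j k'
    obtain ⟨k, hk, hbit⟩ := exists_testBit_true (Nat.succ_pos _)
      (show j.val + 1 ≤ 2 ^ q by rw [← hm]; exact j.isLt)
    rcases pickW ⟨k, by omega⟩ with h | h <;>
      exact ⟨_, h, Or.inr (Or.inr (by simp [adj_iff, baseRel, hbit]))⟩
  have Ke'u' : ∀ (j : Fin m) (k' : Fin (p + 1)), Res E T (.e' j) (.u' k') := by
    intro j k'
    obtain ⟨k, hk, hbit⟩ := exists_testBit_true (Nat.succ_pos _)
      (show j.val + 1 ≤ 2 ^ q by rw [← hm]; exact j.isLt)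
    rcases pickW ⟨k, by omega⟩ with h | h <;>
      exact ⟨_, h, Or.inr (Or.inr (by simp [adj_iff, baseRel, hbit]))⟩
  have Kew : ∀ (j : Fin m) (l : Fin (q + 1)), Res E T (.e j) (.w l) := by
    intro j l
    rcases pickU 0 with h | h <;>
      exact ⟨_, h, Or.inr (Or.inr (by simp [adj_iff, baseRel]))⟩
  have Kew' : ∀ (j : Fin m) (l : Fin (q + 1)), Res E T (.e j) (.w' l) := by
    intro j l
    rcases pickU 0 with h | h <;>
      exact ⟨_, h, Or.inr (Or.inr (by simp [adj_iff, baseRel]))⟩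
  have Ke'w : ∀ (j : Fin m) (l : Fin (q + 1)), Res E T (.e' j) (.w l) := by
    intro j l
    rcases pickU 0 with h | h <;>
      exact ⟨_, h, Or.inr (Or.inr (by simp [adj_iff, baseRel]))⟩
  have Ke'w' : ∀ (j : Fin m) (l : Fin (q + 1)), Res E T (.e' j) (.w' l) := by
    intro j l
    rcases pickU 0 with h | h <;>
      exact ⟨_, h, Or.inr (Or.inr (by simp [adj_iff, baseRel]))⟩
  have Kuu : ∀ (k k' : Fin (p + 1)), k ≠ k' → Res E T (.u k) (.u k') := by
    intro k k' hkk
    rcases pickU k with h | h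
    · exact ⟨_, h, Or.inl rfl⟩
    · exact ⟨_, h, Or.inr (Or.inr (by simp [adj_iff, baseRel, hkk, Ne.symm hkk]))⟩
  have Kuu' : ∀ (k k' : Fin (p + 1)), Res E T (.u k) (.u' k') := by
    intro k k'
    by_cases hkk : k = k'
    · subst hkk
      rcases pickU k with h | h
      · exact ⟨_, h, Or.inl rfl⟩
      · exact ⟨_, h, Or.inr (Or.inl rfl)⟩
    · rcases pickU k with h | h
      · exact ⟨_, h, Or.inl rfl⟩
      · exact ⟨_, h, Or.inr (Or.inr (by simp [adj_iff, baseRel, hkk, Ne.symm hkk]))⟩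
  have Ku'u : ∀ (k k' : Fin (p + 1)), Res E T (.u' k) (.u k') := by
    intro k k'
    by_cases hkk : k = k'
    · subst hkk
      rcases pickU k with h | h
      · exact ⟨_, h, Or.inr (Or.inl rfl)⟩
      · exact ⟨_, h, Or.inl rfl⟩
    · rcases pickU k with h | h
      · exact ⟨_, h, Or.inr (Or.inr (by simp [adj_iff, baseRel, hkk, Ne.symm hkk]))⟩
      · exact ⟨_, h, Or.inl rfl⟩
  have Ku'u' : ∀ (k k' : Fin (p + 1)), k ≠ k' → Res E T (.u' k) (.u' k') := by
    intro k k' hkk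
    rcases pickU k with h | h
    · exact ⟨_, h, Or.inr (Or.inr (by simp [adj_iff, baseRel, hkk, Ne.symm hkk]))⟩
    · exact ⟨_, h, Or.inl rfl⟩
  have Kuw : ∀ (k : Fin (p + 1)) (l : Fin (q + 1)), Res E T (.u k) (.w l) := by
    intro k l
    rcases pickW l with h | h
    · exact ⟨_, h, Or.inr (Or.inl rfl)⟩
    · exact ⟨_, h, Or.inr (Or.inr (by simp [adj_iff, baseRel]))⟩
  have Kuw' : ∀ (k : Fin (p + 1)) (l : Fin (q + 1)), Res E T (.u k) (.w' l) := by
    intro k l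
    rcases pickW l with h | h
    · exact ⟨_, h, Or.inr (Or.inr (by simp [adj_iff, baseRel]))⟩
    · exact ⟨_, h, Or.inr (Or.inl rfl)⟩
  have Ku'w : ∀ (k : Fin (p + 1)) (l : Fin (q + 1)), Res E T (.u' k) (.w l) := by
    intro k l
    rcases pickW l with h | h
    · exact ⟨_, h, Or.inr (Or.inl rfl)⟩
    · exact ⟨_, h, Or.inr (Or.inr (by simp [adj_iff, baseRel]))⟩
  have Ku'w' : ∀ (k : Fin (p + 1)) (l : Fin (q + 1)), Res E T (.u' k) (.w' l) := by
    intro k l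
    rcases pickW l with h | h
    · exact ⟨_, h, Or.inr (Or.inr (by simp [adj_iff, baseRel]))⟩
    · exact ⟨_, h, Or.inr (Or.inl rfl)⟩
  have Kww : ∀ (k k' : Fin (q + 1)), k ≠ k' → Res E T (.w k) (.w k') := by
    intro k k' hkk
    rcases pickW k with h | h
    · exact ⟨_, h, Or.inl rfl⟩
    · exact ⟨_, h, Or.inr (Or.inr (by simp [adj_iff, baseRel, hkk, Ne.symm hkk]))⟩
  have Kww' : ∀ (k k' : Fin (q + 1)), Res E T (.w k) (.w' k') := by
    intro k k'
    rcases pickW k with h | h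
    · exact ⟨_, h, Or.inl rfl⟩
    · exact ⟨_, h, Or.inr (Or.inr (by simp [adj_iff, baseRel]))⟩
  have Kw'w : ∀ (k k' : Fin (q + 1)), Res E T (.w' k) (.w k') := by
    intro k k'
    rcases pickW k with h | h
    · exact ⟨_, h, Or.inr (Or.inr (by simp [adj_iff, baseRel]))⟩
    · exact ⟨_, h, Or.inl rfl⟩
  have Kw'w' : ∀ (k k' : Fin (q + 1)), k ≠ k' → Res E T (.w' k) (.w' k') := by
    intro k k' hkk
    rcases pickW k with h | h
    · exact ⟨_, h, Or.inr (Or.inr (by simp [adj_iff, baseRel, hkk, Ne.symm hkk]))⟩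
    · exact ⟨_, h, Or.inl rfl⟩
  intro a b hab
  rcases a with i | j | j | k | k | k | k <;> rcases b with i' | j' | j' | k' | k' | k' | k'
  · exact Kvv i i' (by simpa using hab)
  · exact Kve i j'
  · exact Kve' i j'
  · exact Kvu i k'
  · exact Kvu' i k'
  · exact Kvw i k'
  · exact Kvw' i k'
  · exact (Kve i' j).symm
  · exact Kee j j' (by simpa using hab)
  · exact Kee' j j'
  · exact Keu j k'
  · exact Keu' j k'
  · exact Kew j k'
  · exact Kew' j k'
  · exact (Kve' i' j).symm
  · exact (Kee' j' j).symm
  · exact Ke'e' j j' (by simpa using hab)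
  · exact Ke'u j k'
  · exact Ke'u' j k'
  · exact Ke'w j k'
  · exact Ke'w' j k'
  · exact (Kvu i' k).symm
  · exact (Keu j' k).symm
  · exact (Ke'u j' k).symm
  · exact Kuu k k' (by simpa using hab)
  · exact Kuu' k k'
  · exact Kuw k k'
  · exact Kuw' k k'
  · exact (Kvu' i' k).symm
  · exact (Keu' j' k).symm
  · exact (Ke'u' j' k).symm
  · exact Ku'u k k'
  · exact Ku'u' k k' (by simpa using hab)
  · exact Ku'w k k'
  · exact Ku'w' k k'
  · exact (Kvw i' k).symm
  · exact (Kew j' k).symm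
  · exact (Ke'w j' k).symm
  · exact (Kuw k' k).symm
  · exact (Ku'w k' k).symm
  · exact Kww k k' (by simpa using hab)
  · exact Kww' k k'
  · exact (Kvw' i' k).symm
  · exact (Kew' j' k).symm
  · exact (Ke'w' j' k).symm
  · exact (Kuw' k' k).symm
  · exact (Ku'w' k' k).symm
  · exact Kw'w k k'
  · exact Kw'w' k k' (by simpa using hab)

end Aux

/-- In the graph `G` of the resolving-set construction, if `S` is a minimal resolving set
with `S ∩ (H ∪ H') ≠ ∅`, then `S = Z ∪ {e}` for some `Z ∈ 𝒵` and some `e ∈ H ∪ H'`. -/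
theorem minimal_resolving_meeting_HH'
    (E : Fin m → Set (Fin n))
    (hn : n = 2 ^ p) (hm : m = 2 ^ q) (hn2 : 2 < n) (hm2 : 2 < m)
    (hSperner : ∀ j j' : Fin m, E j ⊆ E j' → j = j')
    (hfull : ∀ j : Fin m, E j ≠ Set.univ)
    (S : Set (Vert n m p q)) (hS : IsMinimalResolvingSet (G E) S)
    (hmeet : S ∩ (Set.range (Vert.e : Fin m → Vert n m p q) ∪
      Set.range (Vert.e' : Fin m → Vert n m p q)) ≠ ∅) :
    ∃ Z ∈ (ZFam : Set (Set (Vert n m p q))),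
      ∃ x ∈ Set.range (Vert.e : Fin m → Vert n m p q) ∪
        Set.range (Vert.e' : Fin m → Vert n m p q),
        S = Z ∪ {x} := by
  classical
  have hcn := common_nbr E hn hm hn2 hm2
  obtain ⟨f, hfS, hf⟩ := Set.nonempty_iff_ne_empty.mpr hmeet
  have hu := fun k => mem_pair_u E hcn hS.1 k
  have hw := fun k => mem_pair_w E hcn hS.1 k
  set x : Fin (p + 1) → Bool := fun k => decide (Vert.u (n := n) (m := m) (q := q) k ∈ S)
    with hxdef
  set y : Fin (q + 1) → Bool := fun k => decide (Vert.w (n := n) (m := m) (p := p) k ∈ S)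
    with hydef
  set Z : Set (Vert n m p q) :=
    (Set.range fun k => if x k then (Vert.u k : Vert n m p q) else Vert.u' k) ∪
      (Set.range fun k => if y k then (Vert.w k : Vert n m p q) else Vert.w' k) with hZdef
  have hZfam : Z ∈ (ZFam : Set (Set (Vert n m p q))) := ⟨x, y, hZdef⟩
  have hxS : ∀ k : Fin (p + 1), x k = true → Vert.u (n := n) (m := m) (q := q) k ∈ S := by
    intro k hk; rw [hxdef] at hk; simpa using hk
  have hxS' : ∀ k : Fin (p + 1), ¬ x k = true → Vert.u' (n := n) (m := m) (q := q) k ∈ S := by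
    intro k hk; rw [hxdef] at hk; simp at hk; exact (hu k).resolve_left hk
  have hyS : ∀ k : Fin (q + 1), y k = true → Vert.w (n := n) (m := m) (p := p) k ∈ S := by
    intro k hk; rw [hydef] at hk; simpa using hk
  have hyS' : ∀ k : Fin (q + 1), ¬ y k = true → Vert.w' (n := n) (m := m) (p := p) k ∈ S := by
    intro k hk; rw [hydef] at hk; simp at hk; exact (hw k).resolve_left hk
  have hsub : Z ∪ {f} ⊆ S := by
    rintro z ((⟨k, rfl⟩ | ⟨k, rfl⟩) | rfl)
    · by_cases hk : x k = true
      · simpa [hk] using hxS k hk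
      · simpa [hk] using hxS' k hk
    · by_cases hk : y k = true
      · simpa [hk] using hyS k hk
      · simpa [hk] using hyS' k hk
    · exact hfS
  have hres : IsResolvingSet (G E) (Z ∪ {f}) := by
    rw [hZdef]
    exact isResolving_of_adj E hcn _ (key_adj E hn hm hn2 hm2 x y f hf)
  refine ⟨Z, hZfam, f, hf, ?_⟩
  by_cases heq : S = Z ∪ {f}
  · exact heq
  · exact absurd hres (hS.2 (Z ∪ {f})
      (ssubset_iff_subset_ne.mpr ⟨hsub, fun h => heq h.symm⟩))

end ResConstr
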